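/- arXiv:2509.05603 — 5 statements merged into one kernel-verified Lean document; each statement's English description precedes it below -/
import Mathlib

section
/- Let R be a commutative ring, M an R-module, and N ⊆ M a submodule. For integers i ≥ 0 and k, define P_k(⋀^i M) to be 0 for k < 0, all of ⋀^i M for k ≥ i, and for 0 ≤ k ≤ i the image of the natural map ⋀^k M ⊗ ⋀^{i−k} N → ⋀^i M (wedging). Then for all i, j, k, l, the wedge product maps P_k(⋀^i M) × P_l(⋀^j M) into P_{k+l}(⋀^{i+j} M). -/
/-- The preweight filtration `P` on the `i`-th exterior power of `M` with respect to a
submodule `N ⊆ M`, realized inside the exterior algebra: `P_k(⋀^i M)` is `0` for `k < 0`,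
and for `k ≥ 0` it is the span of the wedges `m₀ ∧ ⋯ ∧ m_{i-1}` whose entries of index `≥ k`
lie in `N` (this is the image of `⋀^k M ⊗ ⋀^{i-k} N → ⋀^i M` for `0 ≤ k ≤ i`, and all of
`⋀^i M` for `k ≥ i`). -/
noncomputable def preweightFiltration (R : Type*) [CommRing R] {M : Type*} [AddCommGroup M]
    [Module R M] (N : Submodule R M) (i : ℕ) (k : ℤ) :
    Submodule R (ExteriorAlgebra R M) :=
  if k < 0 then ⊥
  else Submodule.span R
    {x | ∃ m : Fin i → M, (∀ j : Fin i, k ≤ ((j : ℕ) : ℤ) → m j ∈ N) ∧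
      ExteriorAlgebra.ιMulti R i m = x}

lemma ιMulti_mul_ιMulti (R : Type*) [CommRing R] {M : Type*} [AddCommGroup M]
    [Module R M] {i j : ℕ} (m : Fin i → M) (m' : Fin j → M) :
    ExteriorAlgebra.ιMulti R i m * ExteriorAlgebra.ιMulti R j m' =
      ExteriorAlgebra.ιMulti R (i + j) (Fin.append m m') := by
  rw [ExteriorAlgebra.ιMulti_apply, ExteriorAlgebra.ιMulti_apply,
    ExteriorAlgebra.ιMulti_apply, ← List.prod_append, ← List.ofFn_fin_append]
  congr 1
  congr 1
  funext p
  refine Fin.addCases (fun p => ?_) (fun p => ?_) p <;>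
    simp [Fin.append_left, Fin.append_right]

/-- The block-exchange permutation used to reorder a wedge product. -/
lemma shuffle_exists (i j a c : ℕ) (ha : a ≤ i) (hc : c ≤ j) :
    ∃ σ : Equiv.Perm (Fin (i + j)), ∀ p : Fin (i + j),
      (σ p : ℕ) = if (p : ℕ) < a then (p : ℕ)
        else if (p : ℕ) < a + c then (p : ℕ) - a + i
        else if (p : ℕ) < c + i then (p : ℕ) - c
        else (p : ℕ) := by
  set g : ℕ → ℕ := fun p => if p < a then p
        else if p < a + c then p - a + i
        else if p < c + i then p - c
        else p with hg
  have hbound : ∀ p : Fin (i + j), g p < i + j := by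
    intro p
    have := p.2
    simp only [hg]
    split_ifs <;> omega
  have hinj : Function.Injective (fun p : Fin (i + j) => (⟨g p, hbound p⟩ : Fin (i + j))) := by
    intro p q hpq
    have hp := p.2
    have hq := q.2
    have : g p = g q := congrArg Fin.val hpq
    simp only [hg] at this
    ext
    split_ifs at this <;> omega
  exact ⟨Equiv.ofBijective _ ((Finite.injective_iff_bijective).mp hinj),
    fun p => rfl⟩

/-- The key generator-level computation. -/
lemma gen_mem (R : Type*) [CommRing R] {M : Type*} [AddCommGroup M]
    [Module R M] (N : Submodule R M) (i j a c : ℕ) (ha : a ≤ i) (hc : c ≤ j)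
    (m : Fin i → M) (m' : Fin j → M)
    (hm : ∀ t : Fin i, a ≤ (t : ℕ) → m t ∈ N)
    (hm' : ∀ t : Fin j, c ≤ (t : ℕ) → m' t ∈ N) :
    ExteriorAlgebra.ιMulti R i m * ExteriorAlgebra.ιMulti R j m' ∈
      Submodule.span R
        {x | ∃ v : Fin (i + j) → M, (∀ t : Fin (i + j), a + c ≤ (t : ℕ) → v t ∈ N) ∧
          ExteriorAlgebra.ιMulti R (i + j) v = x} := by
  obtain ⟨σ, hσ⟩ := shuffle_exists i j a c ha hc
  have hvN : ∀ t : Fin (i + j), a + c ≤ (t : ℕ) → Fin.append m m' (σ t) ∈ N := by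
    intro t ht
    have hσt := hσ t
    have ht2 := t.2
    have hσt2 := (σ t).2
    rcases lt_or_ge ((σ t : ℕ)) i with h | h
    · have he : σ t = Fin.castAdd j ⟨(σ t : ℕ), h⟩ := by ext; rfl
      rw [he, Fin.append_left]
      refine hm _ ?_
      simp only [Fin.val_mk]
      split_ifs at hσt <;> omega
    · have hlt : (σ t : ℕ) - i < j := by omega
      have he : σ t = Fin.natAdd i ⟨(σ t : ℕ) - i, hlt⟩ := by
        ext
        simp only [Fin.natAdd, Fin.val_mk]
        omega
      rw [he, Fin.append_right]
      refine hm' _ ?_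
      simp only [Fin.val_mk]
      split_ifs at hσt <;> omega
  have hperm : ExteriorAlgebra.ιMulti R (i + j) (Fin.append m m' ∘ σ) =
      Equiv.Perm.sign σ • ExteriorAlgebra.ιMulti R (i + j) (Fin.append m m') :=
    AlternatingMap.map_perm (ExteriorAlgebra.ιMulti R (i + j)) (Fin.append m m') σ
  have hgen : ExteriorAlgebra.ιMulti R (i + j) (Fin.append m m' ∘ σ) ∈
      Submodule.span R
        {x | ∃ v : Fin (i + j) → M, (∀ t : Fin (i + j), a + c ≤ (t : ℕ) → v t ∈ N) ∧
          ExteriorAlgebra.ιMulti R (i + j) v = x} :=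
    Submodule.subset_span ⟨Fin.append m m' ∘ σ, fun t ht => hvN t ht, rfl⟩
  have hxy : ExteriorAlgebra.ιMulti R i m * ExteriorAlgebra.ιMulti R j m' =
      Equiv.Perm.sign σ • ExteriorAlgebra.ιMulti R (i + j) (Fin.append m m' ∘ σ) := by
    rw [hperm, smul_smul, ← pow_two, Int.units_sq, one_smul, ιMulti_mul_ιMulti]
  rw [hxy]
  rcases Int.units_eq_one_or (Equiv.Perm.sign σ) with h | h <;> rw [h]
  · simpa using hgen
  · rw [Units.smul_def]
    simpa using Submodule.neg_mem _ hgen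

/-- The wedge product maps `P_k(⋀^i M) × P_l(⋀^j M)` into `P_{k+l}(⋀^{i+j} M)`. -/
theorem preweightFiltration_mul_mem (R : Type*) [CommRing R] {M : Type*} [AddCommGroup M]
    [Module R M] (N : Submodule R M) (i j : ℕ) (k l : ℤ)
    (x y : ExteriorAlgebra R M)
    (hx : x ∈ preweightFiltration R N i k) (hy : y ∈ preweightFiltration R N j l) :
    x * y ∈ preweightFiltration R N (i + j) (k + l) := by
  rcases lt_or_ge k 0 with hk | hk
  · rw [preweightFiltration, if_pos hk, Submodule.mem_bot] at hx
    subst hx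
    simp only [zero_mul]
    exact Submodule.zero_mem _
  rcases lt_or_ge l 0 with hl | hl
  · rw [preweightFiltration, if_pos hl, Submodule.mem_bot] at hy
    subst hy
    simp only [mul_zero]
    exact Submodule.zero_mem _
  have hkl : ¬ (k + l < 0) := by omega
  rw [preweightFiltration, if_neg (not_lt.mpr hk)] at hx
  rw [preweightFiltration, if_neg (not_lt.mpr hl)] at hy
  rw [preweightFiltration, if_neg hkl]
  induction hx using Submodule.span_induction with
  | mem x hxs =>
    induction hy using Submodule.span_induction with
    | mem y hys =>
      obtain ⟨m, hm, rfl⟩ := hxs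
      obtain ⟨m', hm', rfl⟩ := hys
      have hmono : Submodule.span R
          {x | ∃ v : Fin (i + j) → M,
            (∀ t : Fin (i + j), min k.toNat i + min l.toNat j ≤ (t : ℕ) → v t ∈ N) ∧
            ExteriorAlgebra.ιMulti R (i + j) v = x} ≤
          Submodule.span R
          {x | ∃ v : Fin (i + j) → M,
            (∀ t : Fin (i + j), k + l ≤ ((t : ℕ) : ℤ) → v t ∈ N) ∧
            ExteriorAlgebra.ιMulti R (i + j) v = x} := by
        apply Submodule.span_mono
        rintro z ⟨v, hvN, rfl⟩
        refine ⟨v, fun t ht => hvN t ?_, rfl⟩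
        have := t.2
        omega
      apply hmono
      apply gen_mem R N i j _ _ (min_le_right _ _) (min_le_right _ _) m m'
      · intro t hat
        apply hm
        have := t.2
        omega
      · intro t hct
        apply hm'
        have := t.2
        omega
    | zero => simp only [mul_zero]; exact Submodule.zero_mem _
    | add y₁ y₂ _ _ h1 h2 =>
      rw [mul_add]; exact Submodule.add_mem _ h1 h2
    | smul r y _ h =>
      rw [mul_smul_comm]; exact Submodule.smul_mem _ r h
  | zero => simp only [zero_mul]; exact Submodule.zero_mem _
  | add x₁ x₂ _ _ h1 h2 =>
    rw [add_mul]; exact Submodule.add_mem _ h1 h2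
  | smul r x _ h =>
    rw [smul_mul_assoc]; exact Submodule.smul_mem _ r h
end

section
/- Let R be a commutative ring, N an R-module, and M = N ⊕ R·e where R·e is a free rank-one direct summand with generator e. Equip ⋀^• M with the filtration P_k(⋀^i M) := image of ⋀^k M ⊗ ⋀^{i−k} N → ⋀^i M. Then the map ⋀^{i−1} N → P_1(⋀^i M)/P_0(⋀^i M) sending ω to the class of e ∧ ω is an isomorphism of R-modules. -/
/-- The wedge `m₀ ∧ ⋯ ∧ m_{n-1}` as an element of the `n`-th exterior power. -/
noncomputable def wedgeEl (R : Type*) [CommRing R] {M : Type*} [AddCommGroup M] [Module R M]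
    (n : ℕ) (m : Fin n → M) : ↥(⋀[R]^n M) :=
  ⟨ExteriorAlgebra.ιMulti R n m,
    ExteriorAlgebra.ιMulti_range R n (Set.mem_range_self m)⟩

open ExteriorAlgebra

section QuotientEquiv

variable {R X Y : Type*} [Ring R] [AddCommGroup X] [Module R X] [AddCommGroup Y] [Module R Y]
  {A : Submodule R X} {P₀ P₁ : Submodule R Y} (f : X →ₗ[R] Y) (g : Y →ₗ[R] X)

noncomputable def linearEquivQuotientOfInverseModulo
    (hf : ∀ x ∈ A, f x ∈ P₁) (hg : ∀ y ∈ P₁, g y ∈ A) (hg₀ : P₀ ≤ LinearMap.ker g)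
    (hgf : ∀ x ∈ A, g (f x) = x) (hfg : ∀ y ∈ P₁, f (g y) - y ∈ P₀) :
    A ≃ₗ[R] P₁ ⧸ P₀.comap P₁.subtype :=
  LinearEquiv.ofLinearMap (Submodule.mkQ _ ∘ₗ f.restrict hf)
    (Submodule.liftQ _ (g.restrict hg) fun _ hy => Subtype.ext (hg₀ hy))
    (Submodule.linearMap_qext _ <| LinearMap.ext fun y =>
      (Submodule.Quotient.eq _).2 (hfg y y.2))
    (LinearMap.ext fun x => Subtype.ext (hgf x x.2))

theorem linearEquivQuotientOfInverseModulo_apply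
    (hf : ∀ x ∈ A, f x ∈ P₁) (hg : ∀ y ∈ P₁, g y ∈ A) (hg₀ : P₀ ≤ LinearMap.ker g)
    (hgf : ∀ x ∈ A, g (f x) = x) (hfg : ∀ y ∈ P₁, f (g y) - y ∈ P₀) (x : A) :
    linearEquivQuotientOfInverseModulo f g hf hg hg₀ hgf hfg x
      = Submodule.Quotient.mk ⟨f x, hf x x.2⟩ :=
  rfl

end QuotientEquiv

section Filtration

variable {R M : Type*} [CommRing R] [AddCommGroup M] [Module R M] (N : Submodule R M)

theorem preweightFiltration_zero_le_iff {i : ℕ} {p : Submodule R (ExteriorAlgebra R M)} :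
    preweightFiltration R N i 0 ≤ p ↔ ∀ m : Fin i → M, (∀ j, m j ∈ N) → ιMulti R i m ∈ p := by
  simp [preweightFiltration, Submodule.span_le, Set.subset_def]

theorem preweightFiltration_one_le_iff {n : ℕ} {p : Submodule R (ExteriorAlgebra R M)} :
    preweightFiltration R N (n + 1) 1 ≤ p ↔
      ∀ (x : M) (v : Fin n → M), (∀ j, v j ∈ N) → ιMulti R (n + 1) (Fin.cons x v) ∈ p := by
  rw [preweightFiltration, if_neg (by norm_num), Submodule.span_le]
  constructor
  · intro h x v hv
    exact h ⟨Fin.cons x v, Fin.cases (by simp) fun j _ => by simpa using hv j, rfl⟩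
  · rintro h _ ⟨m, hm, rfl⟩
    rw [← Fin.cons_self_tail m]
    exact h _ _ fun j => hm j.succ (by simp)

end Filtration

section Contraction

variable {R M : Type*} [CommRing R] [AddCommGroup M] [Module R M] (d : Module.Dual R M)

theorem ExteriorAlgebra.ιMulti_cons {k : ℕ} (x : M) (v : Fin k → M) :
    ιMulti R (k + 1) (Fin.cons x v) = ι R x * ιMulti R k v := by
  rw [ιMulti_succ_apply]
  rfl

theorem contractLeft_ιMulti_of_forall_eq_zero {k : ℕ} (v : Fin k → M) (hv : ∀ j, d (v j) = 0) :
    CliffordAlgebra.contractLeft d (ιMulti R k v) = 0 := by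
  induction k with
  | zero => rw [ιMulti_zero_apply]; exact CliffordAlgebra.contractLeft_one _ d
  | succ k ih =>
    rw [← Fin.cons_self_tail v, ιMulti_cons, CliffordAlgebra.contractLeft_ι_mul,
      ih (Fin.tail v) fun j => hv j.succ, hv 0, zero_smul, mul_zero, sub_zero]

theorem contractLeft_ιMulti_cons {k : ℕ} (x : M) (v : Fin k → M) (hv : ∀ j, d (v j) = 0) :
    CliffordAlgebra.contractLeft d (ιMulti R (k + 1) (Fin.cons x v)) = d x • ιMulti R k v := by
  rw [ιMulti_cons, CliffordAlgebra.contractLeft_ι_mul,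
    contractLeft_ιMulti_of_forall_eq_zero d v hv, mul_zero, sub_zero]

end Contraction

theorem LinearMap.mem_range_inl_iff {R M₁ M₂ : Type*} [Semiring R] [AddCommMonoid M₁]
    [AddCommMonoid M₂] [Module R M₁] [Module R M₂] {x : M₁ × M₂} :
    x ∈ range (inl R M₁ M₂) ↔ x.2 = 0 := by
  rw [range_inl, mem_ker, snd_apply]

section Residue

variable (R N : Type*) [CommRing R] [AddCommGroup N] [Module R N]

noncomputable def wedgeUnit : ExteriorAlgebra R N →ₗ[R] ExteriorAlgebra R (N × R) :=
  LinearMap.mulLeft R (ι R ((0, 1) : N × R)) ∘ₗ (map (LinearMap.inl R N R)).toLinearMap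

noncomputable def residue : ExteriorAlgebra R (N × R) →ₗ[R] ExteriorAlgebra R N :=
  (map (LinearMap.fst R N R)).toLinearMap ∘ₗ CliffordAlgebra.contractLeft (LinearMap.snd R N R)

variable {R N}

local notation "𝓟" => preweightFiltration R (LinearMap.range (LinearMap.inl R N R))

theorem wedgeUnit_ιMulti {n : ℕ} (m : Fin n → N) :
    wedgeUnit R N (ιMulti R n m) =
      ιMulti R (n + 1) (Fin.cons ((0, 1) : N × R) fun j => (m j, 0)) := by
  rw [wedgeUnit, LinearMap.comp_apply, AlgHom.toLinearMap_apply, map_apply_ιMulti,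
    LinearMap.mulLeft_apply, ιMulti_cons]
  rfl

theorem residue_ιMulti_cons {n : ℕ} (x : N × R) (v : Fin n → N × R) (hv : ∀ j, (v j).2 = 0) :
    residue R N (ιMulti R (n + 1) (Fin.cons x v)) = x.2 • ιMulti R n fun j => (v j).1 := by
  rw [residue, LinearMap.comp_apply, contractLeft_ιMulti_cons _ x v hv, map_smul,
    AlgHom.toLinearMap_apply, map_apply_ιMulti]
  rfl

theorem residue_ιMulti_of_forall_snd_eq_zero {n : ℕ} (v : Fin n → N × R)
    (hv : ∀ j, (v j).2 = 0) :
    residue R N (ιMulti R n v) = 0 := by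
  rw [residue, LinearMap.comp_apply, contractLeft_ιMulti_of_forall_eq_zero _ v hv, map_zero]

theorem residue_comp_wedgeUnit : residue R N ∘ₗ wedgeUnit R N = LinearMap.id := by
  refine LinearMap.ext_on_range (ιMulti_span R N) fun ⟨n, m⟩ => ?_
  rw [LinearMap.comp_apply, wedgeUnit_ιMulti, residue_ιMulti_cons _ _ fun _ => rfl, one_smul,
    LinearMap.id_apply]

theorem wedgeUnit_residue_ιMulti_cons {n : ℕ} (x : N × R) (v : Fin n → N × R)
    (hv : ∀ j, (v j).2 = 0) :
    wedgeUnit R N (residue R N (ιMulti R (n + 1) (Fin.cons x v))) - ιMulti R (n + 1) (Fin.cons x v)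
      = -ιMulti R (n + 1) (Fin.cons (x.1, 0) v) := by
  have hv' : (fun j => ((v j).1, (0 : R))) = v := funext fun j => Prod.ext rfl (hv j).symm
  have hx : ((x.1, 0) : N × R) = x - x.2 • (0, 1) := by ext <;> simp
  rw [residue_ιMulti_cons x v hv, map_smul, wedgeUnit_ιMulti, hv', hx]
  simp only [ιMulti_cons, map_sub, map_smul, sub_mul, smul_mul_assoc, neg_sub]

theorem wedgeUnit_mem_preweightFiltration_one {n : ℕ} {x : ExteriorAlgebra R N}
    (hx : x ∈ ⋀[R]^n N) : wedgeUnit R N x ∈ 𝓟 (n + 1) 1 := by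
  rw [← ιMulti_span_fixedDegree] at hx
  refine (Submodule.span_le (p := (𝓟 (n + 1) 1).comap (wedgeUnit R N))).2 ?_ hx
  rintro _ ⟨m, rfl⟩
  rw [SetLike.mem_coe, Submodule.mem_comap, wedgeUnit_ιMulti]
  exact (preweightFiltration_one_le_iff _).1 le_rfl _ _ fun j => ⟨m j, rfl⟩

theorem residue_mem_exteriorPower {n : ℕ} {y : ExteriorAlgebra R (N × R)}
    (hy : y ∈ 𝓟 (n + 1) 1) : residue R N y ∈ ⋀[R]^n N := by
  refine (preweightFiltration_one_le_iff _ (p := (⋀[R]^n N).comap (residue R N))).2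
    (fun x v hv => ?_) hy
  rw [Submodule.mem_comap, residue_ιMulti_cons x v fun j => LinearMap.mem_range_inl_iff.1 (hv j)]
  exact Submodule.smul_mem _ _ (ιMulti_range R n (Set.mem_range_self _))

theorem preweightFiltration_zero_le_ker_residue (i : ℕ) : 𝓟 i 0 ≤ LinearMap.ker (residue R N) :=
  (preweightFiltration_zero_le_iff _).2 fun v hv =>
    residue_ιMulti_of_forall_snd_eq_zero v fun j => LinearMap.mem_range_inl_iff.1 (hv j)

theorem wedgeUnit_residue_sub_mem {n : ℕ} {y : ExteriorAlgebra R (N × R)}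
    (hy : y ∈ 𝓟 (n + 1) 1) : wedgeUnit R N (residue R N y) - y ∈ 𝓟 (n + 1) 0 := by
  refine (preweightFiltration_one_le_iff _
    (p := (𝓟 (n + 1) 0).comap (wedgeUnit R N ∘ₗ residue R N - LinearMap.id))).2
    (fun x v hv => ?_) hy
  rw [Submodule.mem_comap, LinearMap.sub_apply, LinearMap.comp_apply, LinearMap.id_apply,
    wedgeUnit_residue_ιMulti_cons x v fun j => LinearMap.mem_range_inl_iff.1 (hv j)]
  exact neg_mem ((preweightFiltration_zero_le_iff _).1 le_rfl _
    (Fin.forall_fin_succ.2 ⟨⟨x.1, rfl⟩, hv⟩))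

end Residue

/-- For `M = N ⊕ R·e` with `e = (0,1)` and `i = n+1 ≥ 1`, the map
`⋀^{i-1} N → P_1(⋀^i M)/P_0(⋀^i M)`, `ω ↦ [e ∧ ω]`, is an isomorphism. -/
theorem residue_iso_rank_one
    (R : Type*) [CommRing R] (N : Type*) [AddCommGroup N] [Module R N] (n : ℕ) :
    ∃ φ : ↥(⋀[R]^n N) ≃ₗ[R]
        (↥(preweightFiltration R (LinearMap.range (LinearMap.inl R N R)) (n + 1) 1) ⧸
          Submodule.comap
            (preweightFiltration R (LinearMap.range (LinearMap.inl R N R)) (n + 1) 1).subtype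
            (preweightFiltration R (LinearMap.range (LinearMap.inl R N R)) (n + 1) 0)),
      ∀ (m : Fin n → N)
        (h : ExteriorAlgebra.ιMulti R (n + 1)
            (Fin.cons ((0, 1) : N × R) fun j => ((m j, 0) : N × R)) ∈
            preweightFiltration R (LinearMap.range (LinearMap.inl R N R)) (n + 1) 1),
        φ (wedgeEl R n m) = Submodule.Quotient.mk ⟨_, h⟩ :=
  ⟨linearEquivQuotientOfInverseModulo (wedgeUnit R N) (residue R N)
      (fun _ => wedgeUnit_mem_preweightFiltration_one) (fun _ => residue_mem_exteriorPower)
      (preweightFiltration_zero_le_ker_residue _)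
      (fun x _ => LinearMap.congr_fun residue_comp_wedgeUnit x)
      (fun _ => wedgeUnit_residue_sub_mem),
    fun m _ => by
      rw [linearEquivQuotientOfInverseModulo_apply]
      simp only [wedgeEl, wedgeUnit_ιMulti]⟩
end

section
/- Let K be a field, V a finite-dimensional K-vector space, and N: V → V a nilpotent endomorphism. Then there exists an increasing filtration M = (M_k)_{k∈ℤ} of V with M_k = 0 for k ≪ 0, M_k = V for k ≫ 0, N(M_k) ⊆ M_{k−2} for all k, and such that for every e ≥ 0 the induced map N^e: gr^M_e V → gr^M_{−e} V is an isomorphism. -/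
/-!
With `X` acting through `N`, a nilpotent `N` makes `V` a finitely generated `X`-power torsion
`K[X]`-module, hence by the structure theorem over a PID a finite product of Jordan blocks
`K[X] ⧸ (X ^ e)`. On a block, where `X ^ j` has weight `e - 1 - 2 j`, take `M_k` to be the ideal
`(X ^ c)` with `c` the number of weights exceeding `k`: every axiom becomes a divisibility between
powers of `X`. Monodromy filtrations pass to finite products and transport along isomorphisms
intertwining the operators.
-/

/-- `M` is a monodromy filtration for the nilpotent operator `N`: an increasing filtration,
eventually `⊥` below and `⊤` above, shifted by `-2` by `N`, and such that for every `e ≥ 0`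
the map induced by `N^e` from `gr^M_e = M_e/M_{e-1}` to `gr^M_{-e} = M_{-e}/M_{-e-1}` is an
isomorphism (expressed elementwise as surjectivity and injectivity on graded pieces). -/
structure IsMonodromyFiltration {K V : Type*} [Field K] [AddCommGroup V] [Module K V]
    (N : Module.End K V) (M : ℤ → Submodule K V) : Prop where
  mono : Monotone M
  eventually_bot : ∃ a : ℤ, ∀ k ≤ a, M k = ⊥
  eventually_top : ∃ b : ℤ, ∀ k : ℤ, b ≤ k → M k = ⊤
  shift : ∀ k : ℤ, ∀ x ∈ M k, N x ∈ M (k - 2)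
  graded_surjective : ∀ e : ℕ, ∀ x ∈ M (-(e : ℤ)), ∃ y ∈ M (e : ℤ),
    x - (N ^ e) y ∈ M (-(e : ℤ) - 1)
  graded_injective : ∀ e : ℕ, ∀ y ∈ M (e : ℤ),
    (N ^ e) y ∈ M (-(e : ℤ) - 1) → y ∈ M ((e : ℤ) - 1)

open Polynomial

theorem LinearMap.piMap_pow {R ι : Type*} [Semiring R] {φ : ι → Type*}
    [∀ i, AddCommMonoid (φ i)] [∀ i, Module R (φ i)] (f : ∀ i, Module.End R (φ i))
    (j : ℕ) :
    LinearMap.piMap f ^ j = LinearMap.piMap (f ^ j) := by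
  induction j with
  | zero => rfl
  | succ j ih => rw [pow_succ, ih, pow_succ]; rfl

theorem Ideal.Quotient.mk_dvd_mk_iff_of_dvd {R : Type*} [CommRing R] {a b q : R} (hba : b ∣ a) :
    Ideal.Quotient.mk (Ideal.span {a}) b ∣ Ideal.Quotient.mk _ q ↔ b ∣ q := by
  refine ⟨fun ⟨r, hr⟩ => ?_, map_dvd _⟩
  obtain ⟨r, rfl⟩ := Ideal.Quotient.mk_surjective r
  rw [← map_mul, Ideal.Quotient.eq, Ideal.mem_span_singleton] at hr
  simpa using dvd_add (hba.trans hr) (dvd_mul_right b r)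

namespace IsMonodromyFiltration

section Comap

variable {K V W : Type*} [Field K] [AddCommGroup V] [Module K V] [AddCommGroup W] [Module K W]

theorem comap_linearEquiv {N : Module.End K V} {N' : Module.End K W} {M : ℤ → Submodule K W}
    (hM : IsMonodromyFiltration N' M) (f : V ≃ₗ[K] W) (hf : N' ∘ₗ f = f ∘ₗ N) :
    IsMonodromyFiltration N (fun k => (M k).comap (f : V →ₗ[K] W)) := by
  have hf_pow (j : ℕ) (v : V) : f ((N ^ j) v) = (N' ^ j) (f v) :=
    (LinearMap.congr_fun (Module.End.commute_pow_left_of_commute hf j) v).symm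
  refine ⟨fun k k' hk => Submodule.comap_mono (hM.mono hk), ?_, ?_, ?_, ?_, ?_⟩
  · obtain ⟨a, ha⟩ := hM.eventually_bot
    exact ⟨a, fun k hk => by rw [ha k hk, Submodule.comap_bot, LinearEquiv.ker]⟩
  · obtain ⟨b, hb⟩ := hM.eventually_top
    exact ⟨b, fun k hk => by rw [hb k hk, Submodule.comap_top]⟩
  · intro k x hx
    rw [Submodule.mem_comap, ← LinearMap.comp_apply, ← hf]
    exact hM.shift k (f x) hx
  · intro e x hx
    obtain ⟨y, hy, hxy⟩ := hM.graded_surjective e (f x) hx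
    refine ⟨f.symm y, by simpa using hy, ?_⟩
    simpa [hf_pow] using hxy
  · intro e y hy hNy
    simp only [Submodule.mem_comap, LinearEquiv.coe_coe, hf_pow] at hy hNy ⊢
    exact hM.graded_injective e (f y) hy hNy

end Comap

section Pi

variable {K ι : Type*} [Field K] [Finite ι] {W : ι → Type*} [∀ i, AddCommGroup (W i)]
  [∀ i, Module K (W i)]

theorem pi {N : ∀ i, Module.End K (W i)} {M : ∀ i, ℤ → Submodule K (W i)}
    (hM : ∀ i, IsMonodromyFiltration (N i) (M i)) :
    IsMonodromyFiltration (LinearMap.piMap N) (fun k => Submodule.pi Set.univ fun i => M i k) := by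
  refine ⟨fun k k' hk x hx i hi => (hM i).mono hk (hx i hi), ?_, ?_,
    fun k x hx i _ => (hM i).shift k (x i) (hx i trivial), ?_, ?_⟩
  · choose a ha using fun i => (hM i).eventually_bot
    obtain ⟨c, hc⟩ := (Set.finite_range a).bddBelow
    refine ⟨c, fun k hk => eq_bot_iff.mpr fun x hx => funext fun i => ?_⟩
    simpa [ha i k (hk.trans (hc ⟨i, rfl⟩))] using hx i trivial
  · choose b hb using fun i => (hM i).eventually_top
    obtain ⟨c, hc⟩ := (Set.finite_range b).bddAbove
    refine ⟨c, fun k hk => eq_top_iff.mpr fun x _ i _ => ?_⟩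
    simp [hb i k ((hc ⟨i, rfl⟩).trans hk)]
  · intro e x hx
    choose y hy hxy using fun i => (hM i).graded_surjective e (x i) (hx i trivial)
    exact ⟨y, fun i _ => hy i, fun i _ => by simpa [LinearMap.piMap_pow] using hxy i⟩
  · intro e y hy hNy i _
    exact (hM i).graded_injective e (y i) (hy i trivial)
      (by simpa [LinearMap.piMap_pow] using hNy i trivial)

end Pi

end IsMonodromyFiltration

/-- The number of `j < e` with `e - 1 - 2 j > k`, i.e. the codimension of `M_k` in the block. -/
def jordanBlockCodim (e : ℕ) (k : ℤ) : ℕ := min e ((e - k) / 2).toNat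

abbrev JordanBlock (K : Type*) [Field K] (e : ℕ) : Type _ := K[X] ⧸ Ideal.span {(X : K[X]) ^ e}

section JordanBlock

variable (K : Type*) [Field K] (e : ℕ)

noncomputable def jordanBlockFiltration (k : ℤ) : Submodule K (JordanBlock K e) :=
  (Ideal.span {Ideal.Quotient.mk _ (X ^ jordanBlockCodim e k)}).restrictScalars K

variable {K e}

theorem mk_mem_jordanBlockFiltration {k : ℤ} {q : K[X]} :
    Ideal.Quotient.mk _ q ∈ jordanBlockFiltration K e k ↔ X ^ jordanBlockCodim e k ∣ q := by
  rw [jordanBlockFiltration, Submodule.restrictScalars_mem, Ideal.mem_span_singleton,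
    Ideal.Quotient.mk_dvd_mk_iff_of_dvd (pow_dvd_pow X (min_le_left _ _))]

theorem jordanBlock_mulLeft_X_pow_mk (a : ℕ) (q : K[X]) :
    (LinearMap.mulLeft K (Ideal.Quotient.mk _ X : JordanBlock K e) ^ a) (Ideal.Quotient.mk _ q) =
      Ideal.Quotient.mk _ (X ^ a * q) := by
  rw [LinearMap.pow_mulLeft, LinearMap.mulLeft_apply, ← map_pow, ← map_mul]

variable (K e)

theorem isMonodromyFiltration_jordanBlock :
    IsMonodromyFiltration (LinearMap.mulLeft K (Ideal.Quotient.mk _ X : JordanBlock K e))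
      (jordanBlockFiltration K e) := by
  have hmk := Ideal.Quotient.mk_surjective (I := Ideal.span {(X : K[X]) ^ e})
  refine ⟨?_, ⟨-e, ?_⟩, ⟨e, ?_⟩, ?_, ?_, ?_⟩
  · intro k k' hk x hx
    obtain ⟨q, rfl⟩ := hmk x
    rw [mk_mem_jordanBlockFiltration] at hx ⊢
    exact (pow_dvd_pow X (by unfold jordanBlockCodim; omega)).trans hx
  · refine fun k hk => eq_bot_iff.mpr fun x hx => ?_
    obtain ⟨q, rfl⟩ := hmk x
    rw [mk_mem_jordanBlockFiltration, show jordanBlockCodim e k = e by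
      unfold jordanBlockCodim; omega] at hx
    exact Ideal.Quotient.eq_zero_iff_mem.mpr (Ideal.mem_span_singleton.mpr hx)
  · refine fun k hk => eq_top_iff.mpr fun x _ => ?_
    obtain ⟨q, rfl⟩ := hmk x
    rw [mk_mem_jordanBlockFiltration, show jordanBlockCodim e k = 0 by
      unfold jordanBlockCodim; omega, pow_zero]
    exact one_dvd q
  · intro k x hx
    obtain ⟨q, rfl⟩ := hmk x
    rw [mk_mem_jordanBlockFiltration] at hx
    rw [LinearMap.mulLeft_apply, ← map_mul, mk_mem_jordanBlockFiltration]
    calc X ^ jordanBlockCodim e (k - 2) ∣ X ^ (jordanBlockCodim e k + 1) :=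
          pow_dvd_pow X (by unfold jordanBlockCodim; omega)
      _ ∣ X * q := by rw [pow_succ']; exact mul_dvd_mul_left X hx
  · intro a x hx
    obtain ⟨q, rfl⟩ := hmk x
    rw [mk_mem_jordanBlockFiltration] at hx
    obtain h | h : jordanBlockCodim e (-a - 1) = jordanBlockCodim e (-a) ∨
        jordanBlockCodim e (-a) = jordanBlockCodim e a + a := by
      unfold jordanBlockCodim; omega
    · refine ⟨0, zero_mem _, ?_⟩
      rwa [map_zero, sub_zero, mk_mem_jordanBlockFiltration, h]
    · obtain ⟨r, rfl⟩ := hx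
      refine ⟨Ideal.Quotient.mk _ (X ^ jordanBlockCodim e a * r),
        mk_mem_jordanBlockFiltration.mpr (dvd_mul_right _ _), ?_⟩
      rw [jordanBlock_mulLeft_X_pow_mk, ← mul_assoc, ← pow_add, add_comm a, ← h, sub_self]
      exact zero_mem _
  · intro a y hy hNy
    obtain ⟨p, rfl⟩ := hmk y
    rw [jordanBlock_mulLeft_X_pow_mk, mk_mem_jordanBlockFiltration] at hNy
    rw [mk_mem_jordanBlockFiltration] at hy ⊢
    obtain h | ⟨h, h'⟩ : jordanBlockCodim e (a - 1) = jordanBlockCodim e a ∨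
        jordanBlockCodim e (a - 1) = jordanBlockCodim e a + 1 ∧
          jordanBlockCodim e (-a - 1) = jordanBlockCodim e a + 1 + a := by
      unfold jordanBlockCodim; omega
    · rwa [h]
    · rw [h', pow_add, mul_comm] at hNy
      rw [h]
      exact (mul_dvd_mul_iff_left (pow_ne_zero a X_ne_zero)).mp hNy

end JordanBlock

theorem IsNilpotent.exists_linearEquiv_pi_jordanBlock {K V : Type*} [Field K] [AddCommGroup V]
    [Module K V] [FiniteDimensional K V] {N : Module.End K V} (hN : IsNilpotent N) :
    ∃ (d : ℕ) (e : Fin d → ℕ) (f : V ≃ₗ[K] ∀ i, JordanBlock K (e i)),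
      LinearMap.piMap (fun i =>
          LinearMap.mulLeft K (Ideal.Quotient.mk _ X : JordanBlock K (e i))) ∘ₗ
        (f : V →ₗ[K] ∀ i, JordanBlock K (e i)) = f ∘ₗ N := by
  obtain ⟨n, hn⟩ := hN
  have htors : Module.IsTorsion' (Module.AEval' N) (Submonoid.powers (X : K[X])) := fun m =>
    ⟨Submonoid.pow X n, by
      obtain ⟨v, rfl⟩ := (Module.AEval'.of N).surjective m
      show (X ^ n : K[X]) • Module.AEval'.of N v = 0
      rw [Module.AEval'.X_pow_smul_of, hn, zero_smul, map_zero]⟩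
  obtain ⟨d, e, ⟨ψ⟩⟩ := Module.torsion_by_prime_power_decomposition irreducible_X htors
  let g := ψ.trans (DirectSum.linearEquivFunOnFintype K[X] (Fin d) _)
  refine ⟨d, e, (Module.AEval'.of N).trans (g.restrictScalars K),
    LinearMap.ext fun v => funext fun i => ?_⟩
  show Ideal.Quotient.mk _ X * g (Module.AEval'.of N v) i = g (Module.AEval'.of N (N v)) i
  rw [← Module.AEval'.X_smul_of, map_smul, Pi.smul_apply, Algebra.smul_def]
  rfl

/-- Existence of the monodromy filtration of a nilpotent endomorphism of a
finite-dimensional vector space. -/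
theorem monodromyFiltration_exists {K V : Type*} [Field K] [AddCommGroup V] [Module K V]
    [FiniteDimensional K V] (N : Module.End K V) (hN : IsNilpotent N) :
    ∃ M : ℤ → Submodule K V, IsMonodromyFiltration N M := by
  obtain ⟨d, e, f, hf⟩ := hN.exists_linearEquiv_pi_jordanBlock
  exact ⟨_, (IsMonodromyFiltration.pi fun i =>
    isMonodromyFiltration_jordanBlock K (e i)).comap_linearEquiv f hf⟩
end

section
/- Let K be a field and let U →^f V →^g W be linear maps of finite-dimensional K-vector spaces with g ∘ f = 0, each equipped with a nilpotent endomorphism N (commuting with f and g) and with the monodromy filtration M of N. Assume f and g are strictly compatible with the filtrations M (i.e., f(M_k U) = f(U) ∩ M_k V and g(M_k V) = g(V) ∩ M_k W for all k). Let H := ker g / im f with the induced endomorphism N and induced filtration M (M_k H := image of (ker g ∩ M_k V) in H). Then for every e ≥ 0 the induced map N^e: gr^M_e H → gr^M_{−e} H is an isomorphism; that is, the induced filtration on H is the monodromy filtration of the induced N. -/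
private lemma comm_pow {K U V : Type*} [Field K] [AddCommGroup U] [Module K U]
    [AddCommGroup V] [Module K V] (f : U →ₗ[K] V) (NU : Module.End K U)
    (NV : Module.End K V) (h : ∀ u : U, f (NU u) = NV (f u)) :
    ∀ (n : ℕ) (u : U), f ((NU ^ n) u) = (NV ^ n) (f u) := by
  intro n
  induction n with
  | zero => simp
  | succ n ih =>
    intro u
    rw [pow_succ, pow_succ, Module.End.mul_apply, Module.End.mul_apply, ih, h]

private lemma shift_pow {K V : Type*} [Field K] [AddCommGroup V] [Module K V]
    (N : Module.End K V) (M : ℤ → Submodule K V)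
    (hs : ∀ k : ℤ, ∀ x ∈ M k, N x ∈ M (k - 2)) :
    ∀ (n : ℕ) (k : ℤ), ∀ x ∈ M k, (N ^ n) x ∈ M (k - 2 * n) := by
  intro n
  induction n with
  | zero => intro k x hx; simpa using hx
  | succ n ih =>
    intro k x hx
    have h1 := hs _ _ (ih k x hx)
    have h2 : (N ^ (n + 1)) x = N ((N ^ n) x) := by
      rw [pow_succ', Module.End.mul_apply]
    rw [h2]
    have : (k - 2 * (n : ℤ)) - 2 = k - 2 * ((n : ℤ) + 1) := by ring
    rw [this] at h1
    simpa using h1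

/-- The 'easy lemma' (Lemma 13.5 of the paper): given `U →f V →g W` with `g ∘ f = 0`,
nilpotent operators commuting with `f` and `g`, monodromy filtrations `M` on each, and `f`, `g`
strictly compatible with `M`, the filtration induced by `M` on `H := ker g / im f`
(namely `M_k H := image of (ker g ∩ M_k V)`) satisfies: the induced map
`N^e : gr^M_e H → gr^M_{-e} H` is an isomorphism for every `e ≥ 0` (expressed elementwise,
with `zero in gr` meaning membership in `(ker g ∩ M_{k-1} V) ⊔ im f`). -/
theorem monodromy_iso_on_subquotient {K U V W : Type*} [Field K]
    [AddCommGroup U] [Module K U] [AddCommGroup V] [Module K V] [AddCommGroup W] [Module K W]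
    [FiniteDimensional K U] [FiniteDimensional K V] [FiniteDimensional K W]
    (f : U →ₗ[K] V) (g : V →ₗ[K] W) (hgf : g ∘ₗ f = 0)
    (NU : Module.End K U) (NV : Module.End K V) (NW : Module.End K W)
    (hNU : IsNilpotent NU) (hNV : IsNilpotent NV) (hNW : IsNilpotent NW)
    (hfN : ∀ u : U, f (NU u) = NV (f u)) (hgN : ∀ v : V, g (NV v) = NW (g v))
    (MU : ℤ → Submodule K U) (MV : ℤ → Submodule K V) (MW : ℤ → Submodule K W)
    (hMU : IsMonodromyFiltration NU MU) (hMV : IsMonodromyFiltration NV MV)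
    (hMW : IsMonodromyFiltration NW MW)
    (hfstrict : ∀ k : ℤ, Submodule.map f (MU k) = LinearMap.range f ⊓ MV k)
    (hgstrict : ∀ k : ℤ, Submodule.map g (MV k) = LinearMap.range g ⊓ MW k) :
    ∀ e : ℕ,
      (∀ x ∈ LinearMap.ker g ⊓ MV (-(e : ℤ)),
        ∃ y ∈ LinearMap.ker g ⊓ MV (e : ℤ),
          x - (NV ^ e) y ∈ (LinearMap.ker g ⊓ MV (-(e : ℤ) - 1)) ⊔ LinearMap.range f) ∧
      (∀ y ∈ LinearMap.ker g ⊓ MV (e : ℤ),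
        (NV ^ e) y ∈ (LinearMap.ker g ⊓ MV (-(e : ℤ) - 1)) ⊔ LinearMap.range f →
          y ∈ (LinearMap.ker g ⊓ MV ((e : ℤ) - 1)) ⊔ LinearMap.range f) := by
  intro e
  have gpow : ∀ (n : ℕ) (v : V), g ((NV ^ n) v) = (NW ^ n) (g v) := comm_pow g NV NW hgN
  have fpow : ∀ (n : ℕ) (u : U), f ((NU ^ n) u) = (NV ^ n) (f u) := comm_pow f NU NV hfN
  have gf0 : ∀ u : U, g (f u) = 0 := by
    intro u
    have := congrFun (congrArg DFunLike.coe hgf) u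
    simpa using this
  constructor
  · -- graded surjectivity
    intro x hx
    obtain ⟨hxg, hxM⟩ := Submodule.mem_inf.mp hx
    have hxg0 : g x = 0 := LinearMap.mem_ker.mp hxg
    obtain ⟨y, hyM, hdiff⟩ := hMV.graded_surjective e x hxM
    have hgy : g y ∈ MW (e : ℤ) := by
      have h1 : g y ∈ Submodule.map g (MV (e : ℤ)) := ⟨y, hyM, rfl⟩
      rw [hgstrict] at h1
      exact h1.2
    have hgNy : (NW ^ e) (g y) ∈ MW (-(e : ℤ) - 1) := by
      have h1 : g (x - (NV ^ e) y) ∈ MW (-(e : ℤ) - 1) := by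
        have h2 : g (x - (NV ^ e) y) ∈ Submodule.map g (MV (-(e : ℤ) - 1)) :=
          ⟨x - (NV ^ e) y, hdiff, rfl⟩
        rw [hgstrict] at h2
        exact h2.2
      have h3 : (NW ^ e) (g y) = -(g (x - (NV ^ e) y)) := by
        rw [← gpow, map_sub, hxg0]
        abel
      rw [h3]
      exact neg_mem h1
    have hgy' : g y ∈ MW ((e : ℤ) - 1) := hMW.graded_injective e (g y) hgy hgNy
    have h4 : g y ∈ Submodule.map g (MV ((e : ℤ) - 1)) := by
      rw [hgstrict]
      exact ⟨⟨y, rfl⟩, hgy'⟩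
    obtain ⟨v, hvM, hgv⟩ := h4
    have hvM' : v ∈ MV (e : ℤ) := hMV.mono (by omega) hvM
    have hker : y - v ∈ LinearMap.ker g := by
      rw [LinearMap.mem_ker, map_sub, hgv, sub_self]
    refine ⟨y - v, Submodule.mem_inf.mpr ⟨hker, sub_mem hyM hvM'⟩, ?_⟩
    apply Submodule.mem_sup_left
    have hNv : (NV ^ e) v ∈ MV (-(e : ℤ) - 1) := by
      have := shift_pow NV MV hMV.shift e ((e : ℤ) - 1) v hvM
      have heq : (e : ℤ) - 1 - 2 * (e : ℕ) = -(e : ℤ) - 1 := by push_cast; ring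
      rwa [heq] at this
    have heq2 : x - (NV ^ e) (y - v) = (x - (NV ^ e) y) + (NV ^ e) v := by
      rw [map_sub]; abel
    refine Submodule.mem_inf.mpr ⟨?_, ?_⟩
    · rw [LinearMap.mem_ker, map_sub, hxg0, gpow]
      rw [LinearMap.mem_ker.mp hker]
      simp
    · rw [heq2]
      exact add_mem hdiff hNv
  · -- graded injectivity
    intro y hy hNy
    obtain ⟨hyg, hyM⟩ := Submodule.mem_inf.mp hy
    obtain ⟨z, hz, w, hw, hzw⟩ := Submodule.mem_sup.mp hNy
    obtain ⟨hzg, hzM⟩ := Submodule.mem_inf.mp hz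
    have hwM : w ∈ MV (-(e : ℤ)) := by
      have h1 : (NV ^ e) y ∈ MV (-(e : ℤ)) := by
        have := shift_pow NV MV hMV.shift e (e : ℤ) y hyM
        have heq : (e : ℤ) - 2 * (e : ℕ) = -(e : ℤ) := by push_cast; ring
        rwa [heq] at this
      have h2 : z ∈ MV (-(e : ℤ)) := hMV.mono (by omega) hzM
      have h3 : w = (NV ^ e) y - z := by rw [← hzw]; abel
      rw [h3]
      exact sub_mem h1 h2
    have h4 : w ∈ Submodule.map f (MU (-(e : ℤ))) := by
      rw [hfstrict]
      exact ⟨hw, hwM⟩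
    obtain ⟨u', hu'M, hfu'⟩ := h4
    obtain ⟨a, haM, hua⟩ := hMU.graded_surjective e u' hu'M
    have hfaM : f a ∈ MV (e : ℤ) := by
      have : f a ∈ Submodule.map f (MU (e : ℤ)) := ⟨a, haM, rfl⟩
      rw [hfstrict] at this
      exact this.2
    have key : (NV ^ e) (y - f a) ∈ MV (-(e : ℤ) - 1) := by
      have hflow : f (u' - (NU ^ e) a) ∈ MV (-(e : ℤ) - 1) := by
        have : f (u' - (NU ^ e) a) ∈ Submodule.map f (MU (-(e : ℤ) - 1)) :=
          ⟨u' - (NU ^ e) a, hua, rfl⟩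
        rw [hfstrict] at this
        exact this.2
      have heq : (NV ^ e) (y - f a) = z + f (u' - (NU ^ e) a) := by
        rw [map_sub, ← fpow, map_sub, hfu', ← hzw]
        abel
      rw [heq]
      exact add_mem hzM hflow
    have hm : y - f a ∈ MV ((e : ℤ) - 1) :=
      hMV.graded_injective e (y - f a) (sub_mem hyM hfaM) key
    have hker : y - f a ∈ LinearMap.ker g := by
      rw [LinearMap.mem_ker, map_sub, LinearMap.mem_ker.mp hyg, gf0]
      simp
    have : y = (y - f a) + f a := by abel
    rw [this]
    exact Submodule.add_mem_sup (Submodule.mem_inf.mpr ⟨hker, hm⟩) ⟨a, rfl⟩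
end

section
/- Let K be a field, V a finite-dimensional K-vector space, W = (W_k) a finite increasing filtration of V, and N: V → V a nilpotent endomorphism with N(W_k) ⊆ W_k for all k. Call an increasing filtration M = (M_j) of V a monodromy filtration of N relative to W if N(M_j) ⊆ M_{j−2} for all j, and for all k ∈ ℤ and e ≥ 0 the map induced by N^e from gr^M_{k+e} gr^W_k V to gr^M_{k−e} gr^W_k V is an isomorphism. Then there is at most one monodromy filtration of N relative to W. -/
/-- `M` is a monodromy filtration of `N` relative to the filtration `W`: an increasing
filtration, eventually `⊥` below and `⊤` above, shifted by `-2` by `N`, and such that for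
every `k ∈ ℤ` and `e ≥ 0` the map induced by `N^e` from `gr^M_{k+e} gr^W_k` to
`gr^M_{k-e} gr^W_k` is an isomorphism.  Here `gr^W_k = W_k/W_{k-1}` carries the filtration
induced by `M`, so membership in `gr^M_j gr^W_k` is computed modulo
`(W_k ⊓ M_{j-1}) ⊔ W_{k-1}`. -/
structure IsRelativeMonodromyFiltration {K V : Type*} [Field K] [AddCommGroup V] [Module K V]
    (N : Module.End K V) (W : ℤ → Submodule K V) (M : ℤ → Submodule K V) : Prop where
  mono : Monotone M
  eventually_bot : ∃ a : ℤ, ∀ j ≤ a, M j = ⊥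
  eventually_top : ∃ b : ℤ, ∀ j : ℤ, b ≤ j → M j = ⊤
  shift : ∀ j : ℤ, ∀ x ∈ M j, N x ∈ M (j - 2)
  rel_graded_surjective : ∀ (k : ℤ) (e : ℕ), ∀ x ∈ W k ⊓ M (k - (e : ℤ)),
    ∃ y ∈ W k ⊓ M (k + (e : ℤ)),
      x - (N ^ e) y ∈ (W k ⊓ M (k - (e : ℤ) - 1)) ⊔ W (k - 1)
  rel_graded_injective : ∀ (k : ℤ) (e : ℕ), ∀ y ∈ W k ⊓ M (k + (e : ℤ)),
    (N ^ e) y ∈ (W k ⊓ M (k - (e : ℤ) - 1)) ⊔ W (k - 1) →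
      y ∈ (W k ⊓ M (k + (e : ℤ) - 1)) ⊔ W (k - 1)

section RMFAux

variable {K V : Type*} [Field K] [AddCommGroup V] [Module K V]
variable {N : Module.End K V} {W M M' : ℤ → Submodule K V}

private lemma rmf_shift_pow (hM : IsRelativeMonodromyFiltration N W M) (m : ℕ) (j : ℤ) (x : V)
    (hx : x ∈ M j) : (N ^ m) x ∈ M (j - 2 * m) := by
  induction m generalizing j x with
  | zero => simpa using hx
  | succ m ih =>
    have h1 : (N ^ (m + 1)) x = (N ^ m) (N x) := by
      rw [pow_succ]; rfl
    have h2 := ih (j - 2) (N x) (hM.shift j x hx)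
    rw [h1, show j - 2 * ((m + 1 : ℕ) : ℤ) = j - 2 - 2 * (m : ℤ) by push_cast; ring]
    exact h2

private lemma rmf_pow_mem_W (hNW : ∀ k : ℤ, ∀ x ∈ W k, N x ∈ W k) (m : ℕ) (k : ℤ) (x : V)
    (hx : x ∈ W k) : (N ^ m) x ∈ W k := by
  induction m generalizing x with
  | zero => simpa using hx
  | succ m ih =>
    rw [show (N ^ (m + 1)) x = (N ^ m) (N x) by rw [pow_succ]; rfl]
    exact ih (N x) (hNW k x hx)

/-- Key degree-dropping lemma: if `w ∈ M s ∩ W l` and `N^t w` lies one step deeper than the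
shift condition forces, then `w ∈ M (s-1)`, provided `l ≤ s - t`. -/
private lemma rmf_lemL (hM : IsRelativeMonodromyFiltration N W M)
    (hNW : ∀ k : ℤ, ∀ x ∈ W k, N x ∈ W k)
    (aW : ℤ) (haW : ∀ k ≤ aW, W k = ⊥) :
    ∀ (l s : ℤ) (t : ℕ) (w : V), l ≤ s - t → w ∈ M s → w ∈ W l →
      (N ^ t) w ∈ M (s - 2 * t - 1) → w ∈ M (s - 1) := by
  have key : ∀ (n : ℕ) (l s : ℤ) (t : ℕ) (w : V), l ≤ aW + n → l ≤ s - t → w ∈ M s →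
      w ∈ W l → (N ^ t) w ∈ M (s - 2 * t - 1) → w ∈ M (s - 1) := by
    intro n
    induction n with
    | zero =>
      intro l s t w hl _ _ hwW _
      have hbot : W l = ⊥ := haW l (by omega)
      rw [hbot, Submodule.mem_bot] at hwW
      rw [hwW]; exact zero_mem _
    | succ n ih =>
      intro l s t w hl hls hwM hwW hwN
      by_cases hl' : l ≤ aW + n
      · exact ih l s t w hl' hls hwM hwW hwN
      set c : ℕ := (s - l).toNat with hcdef
      have hc : (c : ℤ) = s - l := by omega
      have htc : t ≤ c := by omega
      have hpow : (N ^ c) w = (N ^ (c - t)) ((N ^ t) w) := by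
        rw [← Module.End.mul_apply, ← pow_add, Nat.sub_add_cancel htc]
      have hNc : (N ^ c) w ∈ M (l - c - 1) := by
        have h := rmf_shift_pow hM (c - t) (s - 2 * t - 1) ((N ^ t) w) hwN
        rw [show s - 2 * (t : ℤ) - 1 - 2 * ((c - t : ℕ) : ℤ) = l - c - 1 by omega] at h
        rw [hpow]; exact h
      have hinj := hM.rel_graded_injective l c w
        ⟨hwW, by rw [show l + (c : ℤ) = s by omega]; exact hwM⟩
        (Submodule.mem_sup_left ⟨rmf_pow_mem_W hNW c l w hwW, hNc⟩)
      rcases Submodule.mem_sup.mp hinj with ⟨y, hy, z, hz, hyzw⟩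
      have hyM : y ∈ M (s - 1) := by
        have h := hy.2
        rwa [show l + (c : ℤ) - 1 = s - 1 by omega] at h
      have hzw : z = w - y := by rw [← hyzw]; abel
      have hzM : z ∈ M s := by
        rw [hzw]; exact sub_mem hwM (hM.mono (by omega) hyM)
      have hzN : (N ^ t) z ∈ M (s - 2 * t - 1) := by
        rw [hzw, map_sub]
        refine sub_mem hwN ?_
        have h := rmf_shift_pow hM t (s - 1) y hyM
        rwa [show s - 1 - 2 * (t : ℤ) = s - 2 * t - 1 by ring] at h
      have hzrec := ih (l - 1) s t z (by omega) (by omega) hzM hz hzN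
      rw [← hyzw]
      exact add_mem hyM hzrec
  intro l s t w hls hwM hwW hwN
  exact key (l - aW).toNat l s t w (by omega) hls hwM hwW hwN

private lemma rmf_stepA (hM : IsRelativeMonodromyFiltration N W M)
    (hM' : IsRelativeMonodromyFiltration N W M')
    (hNW : ∀ k : ℤ, ∀ x ∈ W k, N x ∈ W k)
    (aW : ℤ) (haW : ∀ k ≤ aW, W k = ⊥) (k : ℤ) (e : ℕ)
    (CIH : ∀ (j : ℤ) (x : V), x ∈ W (k - 1) → (x ∈ M j ↔ x ∈ M' j))
    (Qa1 : ∀ (x : V), x ∈ W k → (x ∈ M (k + e + 1) ↔ x ∈ M' (k + e + 1)))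
    (Qb1 : ∀ (x : V), x ∈ W k → (x ∈ M (k - e - 2) ↔ x ∈ M' (k - e - 2))) :
    ∀ (x : V), x ∈ W k → x ∈ M (k + e) → x ∈ M' (k + e) := by
  intro x hxW hxM
  have hx1 : x ∈ M' (k + e + 1) := (Qa1 x hxW).mp (hM.mono (by omega) hxM)
  have hNxW : (N ^ (e + 1)) x ∈ W k := rmf_pow_mem_W hNW (e + 1) k x hxW
  have hNxM : (N ^ (e + 1)) x ∈ M (k - e - 2) := by
    have h := rmf_shift_pow hM (e + 1) (k + e) x hxM
    rwa [show k + (e : ℤ) - 2 * ((e + 1 : ℕ) : ℤ) = k - e - 2 by push_cast; ring] at h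
  have hNxM' : (N ^ (e + 1)) x ∈ M' (k - e - 2) := (Qb1 _ hNxW).mp hNxM
  have hinj := hM'.rel_graded_injective k (e + 1) x
    ⟨hxW, by rw [show k + ((e + 1 : ℕ) : ℤ) = k + e + 1 by push_cast; ring]; exact hx1⟩
    (Submodule.mem_sup_left ⟨hNxW, by
      rw [show k - ((e + 1 : ℕ) : ℤ) - 1 = k - e - 2 by push_cast; ring]; exact hNxM'⟩)
  rw [show k + ((e + 1 : ℕ) : ℤ) - 1 = k + e by push_cast; ring] at hinj
  rcases Submodule.mem_sup.mp hinj with ⟨m2, hm2, w, hwW, hsum⟩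
  have hwx : w = x - m2 := by rw [← hsum]; abel
  have hm2M : m2 ∈ M (k + e + 1) := (Qa1 m2 hm2.1).mpr (hM'.mono (by omega) hm2.2)
  have hwM : w ∈ M (k + e + 1) := by
    rw [hwx]; exact sub_mem (hM.mono (by omega) hxM) hm2M
  have hNwM : (N ^ (e + 1)) w ∈ M (k - e - 2) := by
    rw [hwx, map_sub]
    refine sub_mem hNxM ?_
    have h1 : (N ^ (e + 1)) m2 ∈ M' (k - e - 2) := by
      have h := rmf_shift_pow hM' (e + 1) (k + e) m2 hm2.2
      rwa [show k + (e : ℤ) - 2 * ((e + 1 : ℕ) : ℤ) = k - e - 2 by push_cast; ring] at h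
    exact (Qb1 _ (rmf_pow_mem_W hNW (e + 1) k m2 hm2.1)).mpr h1
  have hwgood : w ∈ M (k + e) := by
    have h := rmf_lemL hM hNW aW haW (k - 1) (k + e + 1) (e + 1) w
      (by push_cast; omega) hwM hwW
      (by rw [show k + (e : ℤ) + 1 - 2 * ((e + 1 : ℕ) : ℤ) - 1 = k - e - 2 by push_cast; ring]
          exact hNwM)
    rwa [show k + (e : ℤ) + 1 - 1 = k + e by ring] at h
  have hwM' : w ∈ M' (k + e) := (CIH (k + e) w hwW).mp hwgood
  rw [← hsum]
  exact add_mem hm2.2 hwM'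

private lemma rmf_stepB (hM : IsRelativeMonodromyFiltration N W M)
    (hM' : IsRelativeMonodromyFiltration N W M') (k : ℤ) (e : ℕ)
    (CIH : ∀ (j : ℤ) (x : V), x ∈ W (k - 1) → (x ∈ M j ↔ x ∈ M' j))
    (Qa1 : ∀ (x : V), x ∈ W k → (x ∈ M (k + e + 1) ↔ x ∈ M' (k + e + 1)))
    (Qb1 : ∀ (x : V), x ∈ W k → (x ∈ M (k - e - 2) ↔ x ∈ M' (k - e - 2))) :
    ∀ (x : V), x ∈ W k → x ∈ M (k - e - 1) → x ∈ M' (k - e - 1) := by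
  intro x hxW hxM
  obtain ⟨y, ⟨hyW, hyM⟩, hsub⟩ := hM.rel_graded_surjective k (e + 1) x
    ⟨hxW, by rw [show k - ((e + 1 : ℕ) : ℤ) = k - e - 1 by push_cast; ring]; exact hxM⟩
  rw [show k - ((e + 1 : ℕ) : ℤ) - 1 = k - e - 2 by push_cast; ring] at hsub
  rcases Submodule.mem_sup.mp hsub with ⟨m, hm, w, hwW, hsum⟩
  have hyM1 : y ∈ M (k + e + 1) := by
    rwa [show k + ((e + 1 : ℕ) : ℤ) = k + e + 1 by push_cast; ring] at hyM
  have hyM' : y ∈ M' (k + e + 1) := (Qa1 y hyW).mp hyM1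
  have hNy' : (N ^ (e + 1)) y ∈ M' (k - e - 1) := by
    have h := rmf_shift_pow hM' (e + 1) (k + e + 1) y hyM'
    rwa [show k + (e : ℤ) + 1 - 2 * ((e + 1 : ℕ) : ℤ) = k - e - 1 by push_cast; ring] at h
  have hNyM : (N ^ (e + 1)) y ∈ M (k - e - 1) := by
    have h := rmf_shift_pow hM (e + 1) (k + e + 1) y hyM1
    rwa [show k + (e : ℤ) + 1 - 2 * ((e + 1 : ℕ) : ℤ) = k - e - 1 by push_cast; ring] at h
  have hmM' : m ∈ M' (k - e - 1) := hM'.mono (by omega) ((Qb1 m hm.1).mp hm.2)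
  have hwM : w ∈ M (k - e - 1) := by
    have hw : w = x - (N ^ (e + 1)) y - m := by rw [← hsum]; abel
    rw [hw]; exact sub_mem (sub_mem hxM hNyM) (hM.mono (by omega) hm.2)
  have hwM' : w ∈ M' (k - e - 1) := (CIH _ w hwW).mp hwM
  have hx2 : x = (N ^ (e + 1)) y + (m + w) := by rw [hsum]; abel
  rw [hx2]
  exact add_mem hNy' (add_mem hmM' hwM')

end RMFAux

/-- Uniqueness of the monodromy filtration of a nilpotent endomorphism `N` relative to a
finite increasing filtration `W` preserved by `N`, on a finite-dimensional vector space. -/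
theorem relativeMonodromyFiltration_unique {K V : Type*} [Field K] [AddCommGroup V]
    [Module K V] [FiniteDimensional K V]
    (W : ℤ → Submodule K V) (hWmono : Monotone W)
    (hWbot : ∃ a : ℤ, ∀ k ≤ a, W k = ⊥) (hWtop : ∃ b : ℤ, ∀ k : ℤ, b ≤ k → W k = ⊤)
    (N : Module.End K V) (hN : IsNilpotent N)
    (hNW : ∀ k : ℤ, ∀ x ∈ W k, N x ∈ W k)
    (M M' : ℤ → Submodule K V)
    (hM : IsRelativeMonodromyFiltration N W M)
    (hM' : IsRelativeMonodromyFiltration N W M') : M = M' := by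
  obtain ⟨aW, haW⟩ := hWbot
  obtain ⟨bW, hbW⟩ := hWtop
  obtain ⟨a1, ha1⟩ := hM.eventually_bot
  obtain ⟨b1, hb1⟩ := hM.eventually_top
  obtain ⟨a2, ha2⟩ := hM'.eventually_bot
  obtain ⟨b2, hb2⟩ := hM'.eventually_top
  have main : ∀ (n : ℕ) (j : ℤ) (x : V), x ∈ W (aW + n) → (x ∈ M j ↔ x ∈ M' j) := by
    intro n
    induction n with
    | zero =>
      intro j x hx
      rw [show aW + ((0 : ℕ) : ℤ) = aW by simp, haW aW le_rfl, Submodule.mem_bot] at hx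
      simp [hx]
    | succ n ih =>
      intro j x hx
      set k : ℤ := aW + (n : ℤ) + 1 with hkdef
      rw [show aW + ((n + 1 : ℕ) : ℤ) = k by rw [hkdef]; push_cast; ring] at hx
      have CIH : ∀ (j : ℤ) (x : V), x ∈ W (k - 1) → (x ∈ M j ↔ x ∈ M' j) := by
        intro j x hx
        exact ih j x (by rwa [show aW + (n : ℤ) = k - 1 by omega])
      set E0 : ℕ := (b1 - k).toNat + (b2 - k).toNat + (k - 1 - a1).toNat + (k - 1 - a2).toNat
        with hE0def
      have Q : ∀ (d e : ℕ), E0 ≤ e + d →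
          ((∀ (x : V), x ∈ W k → (x ∈ M (k + e) ↔ x ∈ M' (k + e))) ∧
           (∀ (x : V), x ∈ W k → (x ∈ M (k - e - 1) ↔ x ∈ M' (k - e - 1)))) := by
        intro d
        induction d with
        | zero =>
          intro e he
          constructor
          · intro x _
            rw [hb1 (k + e) (by omega), hb2 (k + e) (by omega)]
          · intro x _
            rw [ha1 (k - e - 1) (by omega), ha2 (k - e - 1) (by omega)]
        | succ d ihd =>
          intro e he
          by_cases hcase : E0 ≤ e + d
          · exact ihd e hcase
          · have hQ1 := ihd (e + 1) (by omega)
            have Qa1 : ∀ (x : V), x ∈ W k → (x ∈ M (k + e + 1) ↔ x ∈ M' (k + e + 1)) := by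
              intro x hx
              have h := hQ1.1 x hx
              rwa [show k + ((e + 1 : ℕ) : ℤ) = k + e + 1 by push_cast; ring] at h
            have Qb1 : ∀ (x : V), x ∈ W k → (x ∈ M (k - e - 2) ↔ x ∈ M' (k - e - 2)) := by
              intro x hx
              have h := hQ1.2 x hx
              rwa [show k - ((e + 1 : ℕ) : ℤ) - 1 = k - e - 2 by push_cast; ring] at h
            have CIH' : ∀ (j : ℤ) (x : V), x ∈ W (k - 1) → (x ∈ M' j ↔ x ∈ M j) :=
              fun j x hx => (CIH j x hx).symm
            have Qa1' : ∀ (x : V), x ∈ W k → (x ∈ M' (k + e + 1) ↔ x ∈ M (k + e + 1)) :=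
              fun x hx => (Qa1 x hx).symm
            have Qb1' : ∀ (x : V), x ∈ W k → (x ∈ M' (k - e - 2) ↔ x ∈ M (k - e - 2)) :=
              fun x hx => (Qb1 x hx).symm
            exact ⟨fun x hx => ⟨rmf_stepA hM hM' hNW aW haW k e CIH Qa1 Qb1 x hx,
                                rmf_stepA hM' hM hNW aW haW k e CIH' Qa1' Qb1' x hx⟩,
                   fun x hx => ⟨rmf_stepB hM hM' k e CIH Qa1 Qb1 x hx,
                                rmf_stepB hM' hM k e CIH' Qa1' Qb1' x hx⟩⟩
      by_cases hj : k ≤ j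
      · have h := (Q E0 (j - k).toNat (by omega)).1 x hx
        rwa [show k + (((j - k).toNat : ℕ) : ℤ) = j by omega] at h
      · have h := (Q E0 (k - 1 - j).toNat (by omega)).2 x hx
        rwa [show k - (((k - 1 - j).toNat : ℕ) : ℤ) - 1 = j by omega] at h
  funext j
  ext x
  have hx : x ∈ W (aW + (((bW - aW).toNat : ℕ) : ℤ)) := by
    rw [hbW _ (by omega)]; trivial
  exact main (bW - aW).toNat j x hx
end
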